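/- arXiv:1803.00448 — 3 statements merged into one kernel-verified Lean document; each statement's English description precedes it below -/
import Mathlib

section
/- With N_F = (n+x)/2 ≥ N_B = (n-x)/2 ≥ 1 and x ≥ 0 with n + x even, the total count identity holds: C(n, (n+x)/2) = Σ_{j=1}^{n-x-1} η(n,x,j) + C((n+x)/2 - 1, ⌈(n-x+1)/2⌉ - 1), where η(n,x,j) = C(N_F-1, ⌈(j+1)/2⌉-1)·C(N_B-1, ⌊(j+1)/2⌋-1) + C(N_B-1, ⌈(j+1)/2⌉-1)·C(N_F-1, ⌊(j+1)/2⌋-1). -/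
open Finset

lemma split_sum (g : ℕ → ℕ) (b : ℕ) :
    ∑ j ∈ Finset.Icc 1 (2*b+1), g j
      = ∑ k ∈ Finset.range (b+1), g (2*k+1) + ∑ k ∈ Finset.range b, g (2*k+2) := by
  induction b with
  | zero => simp
  | succ b ih =>
      have h1 : (2*(b+1)+1) = (2*b+2) + 1 := by ring
      rw [h1, Finset.sum_Icc_succ_top (by omega), show (2*b+2) = (2*b+1)+1 by ring,
        Finset.sum_Icc_succ_top (by omega), ih,
        Finset.sum_range_succ (fun k => g (2*k+1)) (b+1),
        Finset.sum_range_succ (fun k => g (2*k+2)) b]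
      ring_nf

lemma key (A B : ℕ) :
    Nat.choose (A+1+(B+1)) (A+1) =
      (∑ j ∈ Finset.Icc 1 (2*B+1),
        (Nat.choose A ((j+2)/2-1) * Nat.choose B ((j+1)/2-1)
         + Nat.choose B ((j+2)/2-1) * Nat.choose A ((j+1)/2-1)))
      + Nat.choose A (B+1) := by
  rw [split_sum]
  have ho : ∀ k ∈ Finset.range (B+1),
      (Nat.choose A ((2*k+1+2)/2-1) * Nat.choose B ((2*k+1+1)/2-1)
       + Nat.choose B ((2*k+1+2)/2-1) * Nat.choose A ((2*k+1+1)/2-1))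
      = 2 * (Nat.choose A k * Nat.choose B k) := by
    intro k _
    have h1 : (2*k+1+2)/2-1 = k := by omega
    have h2 : (2*k+1+1)/2-1 = k := by omega
    rw [h1, h2]; ring
  have he : ∀ k ∈ Finset.range B,
      (Nat.choose A ((2*k+2+2)/2-1) * Nat.choose B ((2*k+2+1)/2-1)
       + Nat.choose B ((2*k+2+2)/2-1) * Nat.choose A ((2*k+2+1)/2-1))
      = Nat.choose A (k+1) * Nat.choose B k + Nat.choose B (k+1) * Nat.choose A k := by
    intro k _
    have h1 : (2*k+2+2)/2-1 = k+1 := by omega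
    have h2 : (2*k+2+1)/2-1 = k := by omega
    rw [h1, h2]
  rw [Finset.sum_congr rfl ho, Finset.sum_congr rfl he]
  -- extend the even sum to range (B+1)
  have hext : (∑ k ∈ Finset.range B,
      (Nat.choose A (k+1) * Nat.choose B k + Nat.choose B (k+1) * Nat.choose A k))
      + Nat.choose A (B+1)
      = ∑ k ∈ Finset.range (B+1),
      (Nat.choose A (k+1) * Nat.choose B k + Nat.choose B (k+1) * Nat.choose A k) := by
    rw [Finset.sum_range_succ]
    simp [Nat.choose_self, Nat.choose_succ_self]
  rw [add_assoc _ _ (Nat.choose A (B+1)), hext, ← Finset.sum_add_distrib]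
  -- now RHS = ∑_{k∈range(B+1)} t k with
  -- t k = 2*(A.choose k * B.choose k) + (A.choose (k+1)*B.choose k + B.choose (k+1)*A.choose k)
  set f : ℕ → ℕ := fun k => Nat.choose A k * Nat.choose B k with hf
  set t : ℕ → ℕ := fun k =>
    2 * (Nat.choose A k * Nat.choose B k)
      + (Nat.choose A (k+1) * Nat.choose B k + Nat.choose B (k+1) * Nat.choose A k) with ht
  have hpt : ∀ k, t k + f (k+1)
      = Nat.choose (A+1) (k+1) * Nat.choose (B+1) (k+1) + f k := by
    intro k
    simp only [ht, hf, Nat.choose_succ_succ]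
    ring
  have hsum : (∑ k ∈ Finset.range (B+1), t k) + (∑ k ∈ Finset.range (B+1), f (k+1))
      = (∑ k ∈ Finset.range (B+1), Nat.choose (A+1) (k+1) * Nat.choose (B+1) (k+1))
        + (∑ k ∈ Finset.range (B+1), f k) := by
    rw [← Finset.sum_add_distrib, ← Finset.sum_add_distrib]
    exact Finset.sum_congr rfl fun k _ => hpt k
  have hshift : (∑ k ∈ Finset.range (B+1), f (k+1)) + f 0
      = (∑ k ∈ Finset.range (B+1), f k) + f (B+1) := by
    rw [← Finset.sum_range_succ' f (B+1), Finset.sum_range_succ f (B+1)]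
  have hf0 : f 0 = 1 := by simp [hf]
  have hfB : f (B+1) = 0 := by simp [hf, Nat.choose_succ_self]
  have hmain : (∑ k ∈ Finset.range (B+1), t k)
      = (∑ k ∈ Finset.range (B+1), Nat.choose (A+1) (k+1) * Nat.choose (B+1) (k+1)) + 1 := by
    omega
  rw [hmain]
  -- Vandermonde
  have hv : Nat.choose (A+1+(B+1)) (A+1) = Nat.choose (A+1+(B+1)) (B+1) := by
    rw [← Nat.choose_symm (by omega : A+1 ≤ A+1+(B+1))]
    congr 1; omega
  rw [hv, Nat.add_choose_eq, Finset.Nat.sum_antidiagonal_eq_sum_range_succ_mk]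
  rw [Finset.sum_range_succ' (fun k => Nat.choose (A+1) k * Nat.choose (B+1) (B+1-k)) (B+1)]
  simp only [Nat.sub_zero, Nat.choose_self, Nat.choose_zero_right, one_mul, mul_one]
  congr 1
  refine Finset.sum_congr rfl fun k hk => ?_
  rw [Finset.mem_range] at hk
  congr 1
  rw [← Nat.choose_symm (by omega : k+1 ≤ B+1)]

/-- With `N_F = (n+x)/2 ≥ N_B = (n-x)/2 ≥ 1`, `x ≥ 0`, `n + x` even:
`C(n,(n+x)/2) = Σ_{j=1}^{n-x-1} η(n,x,j) + C((n+x)/2 - 1, ⌈(n-x+1)/2⌉ - 1)`. -/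
theorem stmt_6 (n x : ℕ) (hpar : (n + x) % 2 = 0) (hx : x < n) :
    Nat.choose n ((n + x) / 2) =
      (∑ j ∈ Finset.Icc 1 (n - x - 1),
        (Nat.choose ((n + x) / 2 - 1) ((j + 2) / 2 - 1) *
           Nat.choose ((n - x) / 2 - 1) ((j + 1) / 2 - 1)
         + Nat.choose ((n - x) / 2 - 1) ((j + 2) / 2 - 1) *
           Nat.choose ((n + x) / 2 - 1) ((j + 1) / 2 - 1)))
      + Nat.choose ((n + x) / 2 - 1) ((n - x + 2) / 2 - 1) := by
  obtain ⟨A, hA⟩ : ∃ A, (n + x) / 2 = A + 1 := ⟨(n+x)/2 - 1, by omega⟩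
  obtain ⟨B, hB⟩ : ∃ B, (n - x) / 2 = B + 1 := ⟨(n-x)/2 - 1, by omega⟩
  have e1 : (n + x) / 2 - 1 = A := by omega
  have e2 : (n - x) / 2 - 1 = B := by omega
  have e3 : n - x - 1 = 2 * B + 1 := by omega
  have e4 : (n - x + 2) / 2 - 1 = B + 1 := by omega
  have e5 : n = A + 1 + (B + 1) := by omega
  rw [e1, e2, e3, e4, hA, e5]
  exact key A B
end

section
/- For x = 0 (equal numbers of F's and B's, n = 2m even, m ≥ 1): C(n, n/2) = Σ_{j=1}^{n-1} [ C(n/2-1, ⌈(j+1)/2⌉-1)·C(n/2-1, ⌊(j+1)/2⌋-1) + C(n/2-1, ⌈(j+1)/2⌉-1)·C(n/2-1, ⌊(j+1)/2⌋-1) ], i.e., C(2m, m) = 2·Σ_{j=1}^{2m-1} C(m-1, ⌈(j+1)/2⌉-1)·C(m-1, ⌊(j+1)/2⌋-1). -/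
open Finset

private lemma split_parity (g : ℕ → ℕ) (n : ℕ) :
    ∑ i ∈ Finset.range (2 * n + 1), g i =
      ∑ k ∈ Finset.range (n + 1), g (2 * k) + ∑ k ∈ Finset.range n, g (2 * k + 1) := by
  induction n with
  | zero => simp
  | succ n ih =>
    have h : 2 * (n + 1) + 1 = (2 * n + 1) + 1 + 1 := by ring
    have h1 : 2 * n + 1 + 1 = 2 * (n + 1) := by ring
    rw [h, Finset.sum_range_succ, Finset.sum_range_succ, ih, h1]
    simp only [Finset.sum_range_succ]
    ring

private lemma vand1 (n : ℕ) :
    ∑ k ∈ Finset.range (n + 1), n.choose k * n.choose k = (2 * n).choose n := by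
  have h := Nat.add_choose_eq n n n
  rw [Finset.Nat.sum_antidiagonal_eq_sum_range_succ_mk] at h
  rw [two_mul, h]
  refine Finset.sum_congr rfl fun k hk => ?_
  have hk' : k ≤ n := by simpa using Finset.mem_range_succ_iff.mp hk
  rw [Nat.choose_symm hk']

private lemma vand2 (n : ℕ) :
    ∑ k ∈ Finset.range n, n.choose (k + 1) * n.choose k = (2 * n).choose (n + 1) := by
  have h := Nat.add_choose_eq n n (n + 1)
  rw [Finset.Nat.sum_antidiagonal_eq_sum_range_succ_mk] at h
  rw [two_mul, h, Finset.sum_range_succ', Finset.sum_range_succ]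
  have e0 : n.choose 0 * n.choose (n + 1 - 0) = 0 := by
    simp [Nat.choose_eq_zero_of_lt (by omega : n < n + 1)]
  have e1 : n.choose (n + 1) * n.choose (n + 1 - (n + 1)) = 0 := by
    simp [Nat.choose_eq_zero_of_lt (by omega : n < n + 1)]
  rw [e0, e1, add_zero, add_zero]
  refine Finset.sum_congr rfl fun k hk => ?_
  have hk' : k < n := Finset.mem_range.mp hk
  have e2 : n + 1 - (k + 1) = n - k := by omega
  rw [e2, Nat.choose_symm (Nat.le_of_lt hk')]

/-- For `x = 0` (length `n = 2m`, `m` F's and `m` B's, `m ≥ 1`):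
`C(2m, m) = 2·Σ_{j=1}^{2m-1} C(m-1,⌈(j+1)/2⌉-1)·C(m-1,⌊(j+1)/2⌋-1)`. -/
theorem stmt_7 (m : ℕ) (hm : 1 ≤ m) :
    Nat.choose (2 * m) m =
      2 * ∑ j ∈ Finset.Icc 1 (2 * m - 1),
        Nat.choose (m - 1) ((j + 2) / 2 - 1) * Nat.choose (m - 1) ((j + 1) / 2 - 1) := by
  obtain ⟨n, rfl⟩ : ∃ n, m = n + 1 := ⟨m - 1, by omega⟩
  have h1 : 2 * (n + 1) - 1 = 2 * n + 1 := by omega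
  rw [h1, ← Finset.Ico_add_one_right_eq_Icc, Finset.sum_Ico_eq_sum_range]
  have h2 : 2 * n + 1 + 1 - 1 = 2 * n + 1 := by omega
  rw [h2, split_parity]
  have hA : ∑ k ∈ Finset.range (n + 1),
      (n + 1 - 1).choose ((1 + 2 * k + 2) / 2 - 1) * (n + 1 - 1).choose ((1 + 2 * k + 1) / 2 - 1)
      = ∑ k ∈ Finset.range (n + 1), n.choose k * n.choose k := by
    refine Finset.sum_congr rfl fun k _ => ?_
    have e1 : (1 + 2 * k + 2) / 2 - 1 = k := by omega
    have e2 : (1 + 2 * k + 1) / 2 - 1 = k := by omega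
    rw [e1, e2]; simp
  have hB : ∑ k ∈ Finset.range n,
      (n + 1 - 1).choose ((1 + (2 * k + 1) + 2) / 2 - 1) *
        (n + 1 - 1).choose ((1 + (2 * k + 1) + 1) / 2 - 1)
      = ∑ k ∈ Finset.range n, n.choose (k + 1) * n.choose k := by
    refine Finset.sum_congr rfl fun k _ => ?_
    have e1 : (1 + (2 * k + 1) + 2) / 2 - 1 = k + 1 := by omega
    have e2 : (1 + (2 * k + 1) + 1) / 2 - 1 = k := by omega
    rw [e1, e2]; simp
  rw [hA, hB, vand1, vand2]
  have p1 : (2 * n).choose n + (2 * n).choose (n + 1) = (2 * n + 1).choose (n + 1) :=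
    (Nat.choose_succ_succ' (2 * n) n).symm
  have p2 : (2 * n + 1).choose (n + 1) = (2 * n + 1).choose n := by
    have := Nat.choose_symm (n := 2 * n + 1) (k := n) (by omega)
    have e : 2 * n + 1 - n = n + 1 := by omega
    rw [e] at this
    exact this
  have p3 : (2 * n + 1).choose n + (2 * n + 1).choose (n + 1) = (2 * n + 2).choose (n + 1) :=
    (Nat.choose_succ_succ' (2 * n + 1) n).symm
  have : 2 * (n + 1) = 2 * n + 2 := by ring
  rw [this]
  omega
end

section
/- Define the parity ε(S) of S ∈ {B,F}^n as +1 if the number of FF-transitions in S is even and -1 otherwise. If S starts with B, contains N_F = (n+x)/2 F's, and has j switches, then ε(S) = (-1)^{(n+x)/2 - ⌊(j+1)/2⌋}. -/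
/-- `true` represents the letter F, `false` the letter B. -/
def switches (S : List Bool) : ℕ :=
  ((S.zip S.tail).filter (fun p => p.1 != p.2)).length

/-- Number of FF-transitions: adjacent positions both equal to F. -/
def ffCount (S : List Bool) : ℕ :=
  ((S.zip S.tail).filter (fun p => p.1 && p.2)).length

/-- number of maximal blocks of `true`s (counting block ends). -/
def fb : List Bool → ℕ
  | [] => 0
  | a :: l => fb l + (if a = true ∧ l.head? ≠ some true then 1 else 0)

lemma ffCount_cons_cons (a b : Bool) (l : List Bool) :
    ffCount (a :: b :: l) = ffCount (b :: l) + (if a && b then 1 else 0) := by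
  cases a <;> cases b <;> simp [ffCount, List.filter_cons]

lemma switches_cons_cons (a b : Bool) (l : List Bool) :
    switches (a :: b :: l) = switches (b :: l) + (if a != b then 1 else 0) := by
  cases a <;> cases b <;> simp [switches, List.filter_cons]

lemma lemA : ∀ S : List Bool, ffCount S + fb S = S.count true := by
  intro S
  induction S with
  | nil => simp [ffCount, fb]
  | cons a l ih =>
    cases l with
    | nil => cases a <;> simp [ffCount, fb]
    | cons b l' =>
      rw [ffCount_cons_cons]
      cases a <;> cases b <;>
        simp_all [fb, List.count_cons] <;> omega

lemma lemB : ∀ S : List Bool,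
    2 * fb S = switches S + (if S.head? = some true then 1 else 0)
      + (if S.getLast? = some true then 1 else 0) := by
  intro S
  induction S with
  | nil => simp [fb, switches]
  | cons a l ih =>
    cases l with
    | nil => cases a <;> simp [fb, switches]
    | cons b l' =>
      rw [switches_cons_cons]
      have hlast : (a :: b :: l').getLast? = (b :: l').getLast? := by
        simp [List.getLast?]
      rw [hlast]
      cases a <;> cases b <;> simp_all [fb] <;> omega

/-- Parity of a B-string: if `S` starts with B, has `N_F = (n+x)/2` F's and
`j` switches, then `(-1)^{#FF} = (-1)^{(n+x)/2 - ⌊(j+1)/2⌋}`. -/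
theorem stmt_10 (n x j : ℕ) (S : List Bool) (hlen : S.length = n)
    (hpar : (n + x) % 2 = 0) (hhead : S.head? = some false)
    (hNF : S.count true = (n + x) / 2) (hj : switches S = j) :
    ((-1 : ℤ) ^ ffCount S) = (-1) ^ ((n + x) / 2 - (j + 1) / 2) := by
  have hA := lemA S
  have hB := lemB S
  rw [hhead] at hB
  norm_num at hB
  have ht : (if S.getLast? = some true then 1 else 0) ≤ 1 := by
    split <;> omega
  congr 1
  omega
end
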